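/- Let n ≥ 7 be odd, and in the alternating group A_n on {1,…,n} let x₁ = (1,2,4) and y₁ = (1,2,3,4,…,n). Then there exist no automorphism φ of A_n and element g ∈ A_n such that gφ(x₁)g⁻¹ = x₁⁻¹ and gφ(y₁)g⁻¹ = y₁⁻¹. -/

import Mathlib

/-!
Write `c k = y₁ᵏ x₁ y₁⁻ᵏ`, the 3-cycle `(k, k+1, k+3)`. If `ψ = (g · g⁻¹) ∘ φ` inverted `x₁` and
`y₁`, it would send `c k` to `(c (-k))⁻¹`, so any relation `(c i * c j * c k) ^ m = 1` would yield,
after conjugating by `y₁ ^ s`, the relation `(c (s-k) * c (s-j) * c (s-i)) ^ m = 1`.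
But `c 0 * c 1 * c 3` has order 5 while `c 0 * c 2 * c 3` has order 7; both products live on the
first seven points, so this is a computation in `S₇`.
-/

open Equiv List

theorem List.formPerm_map_apply {α β : Type*} [DecidableEq α] [DecidableEq β] {f : α → β}
    (hf : Function.Injective f) :
    ∀ (l : List α) (a : α), (l.map f).formPerm (f a) = f (l.formPerm a)
  | [], _ => rfl
  | [_], _ => rfl
  | x :: y :: l, a => by
    rw [map_cons, map_cons, formPerm_cons_cons, formPerm_cons_cons, Perm.mul_apply,
      Perm.mul_apply, ← map_cons, formPerm_map_apply hf (y :: l), hf.swap_apply]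

theorem List.formPerm_finRange (n : ℕ) : (finRange n).formPerm = finRotate n := by
  ext i : 1
  have := formPerm_apply_getElem (finRange n) (nodup_finRange n) i (by simp)
  simp only [getElem_finRange, length_finRange, Fin.cast_mk, Fin.eta] at this
  rw [this, finRotate_apply]
  ext
  simp [Fin.val_add]

theorem Equiv.Perm.mul_formPerm_mul_inv {α : Type*} [DecidableEq α] (σ : Perm α) (l : List α) :
    σ * l.formPerm * σ⁻¹ = (l.map σ).formPerm := by
  ext b
  obtain ⟨a, rfl⟩ := σ.surjective b
  simp [formPerm_map_apply σ.injective]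

theorem Equiv.Perm.viaEmbedding_formPerm {α β : Type*} [DecidableEq α] [Fintype α]
    [DecidableEq β] (ι : α ↪ β) (l : List α) : l.formPerm.viaEmbedding ι = (l.map ι).formPerm := by
  ext b
  by_cases hb : b ∈ Set.range ι
  · obtain ⟨a, rfl⟩ := hb
    rw [viaEmbedding_apply, formPerm_map_apply ι.injective]
  · rw [viaEmbedding_apply_of_notMem _ _ _ hb, formPerm_apply_of_notMem]
    simp only [mem_map, not_exists, not_and]
    exact fun a _ h => hb ⟨a, h⟩

theorem val_finRotate_pow_of_add_lt {n : ℕ} (i : Fin n) {k : ℕ} (hk : i.val + k < n) :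
    ((finRotate n ^ k) i : ℕ) = i + k := by
  induction k with
  | zero => rfl
  | succ k ih =>
    rw [pow_succ', Perm.mul_apply, finRotate_apply, Fin.val_add, ih (by omega), Fin.val_one',
      Nat.one_mod_eq_one.mpr (by omega), Nat.mod_eq_of_lt (by omega), add_assoc]

theorem finRotate_pow_castLE {m n : ℕ} (h : m ≤ n) (i : Fin m) {k : ℕ} (hk : i.val + k < m) :
    (finRotate n ^ k) (Fin.castLE h i) = Fin.castLE h ((finRotate m ^ k) i) := by
  ext
  rw [val_finRotate_pow_of_add_lt _ (by simp only [Fin.val_castLE]; omega), Fin.val_castLE,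
    Fin.val_castLE, val_finRotate_pow_of_add_lt _ hk]

section ConjZPow

variable {G : Type*} [Group G]

def conjZPow (x y : G) (k : ℤ) : G := y ^ k * x * (y ^ k)⁻¹

theorem map_conjZPow {H F : Type*} [Group H] [FunLike F G H] [MonoidHomClass F G H] (f : F)
    (x y : G) (k : ℤ) : f (conjZPow x y k) = conjZPow (f x) (f y) k := by
  simp only [conjZPow, map_mul, map_inv, map_zpow]

theorem zpow_mul_conjZPow_mul_inv (x y : G) (s k : ℤ) :
    y ^ s * conjZPow x y k * (y ^ s)⁻¹ = conjZPow x y (s + k) := by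
  simp only [conjZPow, zpow_add]
  group

variable {F : Type*} [FunLike F G G] [MonoidHomClass F G G] {ψ : F} {x y : G}

theorem map_conjZPow_of_map_eq_inv (hx : ψ x = x⁻¹) (hy : ψ y = y⁻¹) (k : ℤ) :
    ψ (conjZPow x y k) = (conjZPow x y (-k))⁻¹ := by
  rw [map_conjZPow, hx, hy]
  simp only [conjZPow]
  group

theorem conjZPow_mul_mul_pow_eq_one_of_map_eq_inv (hx : ψ x = x⁻¹) (hy : ψ y = y⁻¹)
    {i j k : ℤ} {m : ℕ} (h : (conjZPow x y i * conjZPow x y j * conjZPow x y k) ^ m = 1)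
    (s : ℤ) : (conjZPow x y (s - k) * conjZPow x y (s - j) * conjZPow x y (s - i)) ^ m = 1 := by
  have hψ := congrArg ψ h
  rw [map_pow, map_mul, map_mul, map_one, map_conjZPow_of_map_eq_inv hx hy,
    map_conjZPow_of_map_eq_inv hx hy, map_conjZPow_of_map_eq_inv hx hy, ← mul_inv_rev,
    ← mul_inv_rev, inv_pow, inv_eq_one] at hψ
  have hconj := congrArg (MulAut.conj (y ^ s)) hψ
  rw [map_pow, map_mul, map_mul, map_one, MulAut.conj_apply, MulAut.conj_apply, MulAut.conj_apply,
    zpow_mul_conjZPow_mul_inv, zpow_mul_conjZPow_mul_inv, zpow_mul_conjZPow_mul_inv] at hconj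
  simpa only [sub_eq_add_neg, mul_assoc] using hconj

end ConjZPow

theorem conjZPow_finRotate_formPerm_castLE {m n : ℕ} (h : m ≤ n) (l : List (Fin m)) {k : ℕ}
    (hl : ∀ i ∈ l, i.val + k < m) :
    conjZPow (l.map (Fin.castLEEmb h)).formPerm (finRotate n) k =
      Perm.viaEmbeddingHom (Fin.castLEEmb h) (conjZPow l.formPerm (finRotate m) k) := by
  simp only [conjZPow, zpow_natCast, Perm.mul_formPerm_mul_inv, Perm.viaEmbeddingHom_apply,
    Perm.viaEmbedding_formPerm, map_map]
  congr 1
  refine map_congr_left fun i hi => ?_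
  exact finRotate_pow_castLE h i (hl i hi)

/-- The 3-cycle `(k, k+1, k+3)` of `Fin n`, indices taken mod `n`. -/
def rotatedCycle (n : ℕ) [NeZero n] (k : ℤ) : Perm (Fin n) :=
  conjZPow (formPerm [0, 1, 3]) (finRotate n) k

theorem rotatedCycle_eq_viaEmbeddingHom {n : ℕ} [NeZero n] (hn : 7 ≤ n) {k : ℕ} (hk : k ≤ 3) :
    rotatedCycle n k = Perm.viaEmbeddingHom (Fin.castLEEmb hn) (rotatedCycle 7 k) := by
  have hl : [(0 : Fin n), 1, 3] = [(0 : Fin 7), 1, 3].map (Fin.castLEEmb hn) := by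
    simp [Fin.ext_iff, Nat.mod_eq_of_lt (show 1 < n by omega),
      Nat.mod_eq_of_lt (show 3 < n by omega)]
  rw [rotatedCycle, hl]
  exact conjZPow_finRotate_formPerm_castLE hn _ (by simp; omega)

theorem rotatedCycle_mul_mul_pow_eq_one_iff {n : ℕ} [NeZero n] (hn : 7 ≤ n) {i j k : ℕ}
    (hi : i ≤ 3) (hj : j ≤ 3) (hk : k ≤ 3) (m : ℕ) :
    (rotatedCycle n i * rotatedCycle n j * rotatedCycle n k) ^ m = 1 ↔
      (rotatedCycle 7 i * rotatedCycle 7 j * rotatedCycle 7 k) ^ m = 1 := by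
  rw [rotatedCycle_eq_viaEmbeddingHom hn hi, rotatedCycle_eq_viaEmbeddingHom hn hj,
    rotatedCycle_eq_viaEmbeddingHom hn hk, ← map_mul, ← map_mul, ← map_pow,
    map_eq_one_iff _ (Perm.viaEmbeddingHom_injective _)]

set_option maxRecDepth 10000 in
theorem rotatedCycle_mul_mul_pow_five {n : ℕ} [NeZero n] (hn : 7 ≤ n) :
    (rotatedCycle n 0 * rotatedCycle n 1 * rotatedCycle n 3) ^ 5 = 1 := by
  simpa using (rotatedCycle_mul_mul_pow_eq_one_iff hn (i := 0) (j := 1) (k := 3)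
    (by norm_num) (by norm_num) (by norm_num) 5).2 (by decide)

set_option maxRecDepth 10000 in
theorem rotatedCycle_mul_mul_pow_five_ne_one {n : ℕ} [NeZero n] (hn : 7 ≤ n) :
    (rotatedCycle n 0 * rotatedCycle n 2 * rotatedCycle n 3) ^ 5 ≠ 1 := by
  simpa using (rotatedCycle_mul_mul_pow_eq_one_iff hn (i := 0) (j := 2) (k := 3)
    (by norm_num) (by norm_num) (by norm_num) 5).not.2 (by decide)

theorem alternatingGroup_odd_first_pair_not_invertible_general
    (n : ℕ) [NeZero n] (hn : 7 ≤ n)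
    (x₁ y₁ : Equiv.Perm (Fin n))
    (hx₁ : x₁ = List.formPerm [(0 : Fin n), 1, 3])
    (hy₁ : y₁ = List.formPerm (List.finRange n))
    (hx₁A : x₁ ∈ alternatingGroup (Fin n)) (hy₁A : y₁ ∈ alternatingGroup (Fin n)) :
    ¬ ∃ (φ : alternatingGroup (Fin n) ≃* alternatingGroup (Fin n))
        (g : alternatingGroup (Fin n)),
        g * φ ⟨x₁, hx₁A⟩ * g⁻¹ = (⟨x₁, hx₁A⟩ : alternatingGroup (Fin n))⁻¹ ∧
        g * φ ⟨y₁, hy₁A⟩ * g⁻¹ = (⟨y₁, hy₁A⟩ : alternatingGroup (Fin n))⁻¹ := by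
  rintro ⟨φ, g, hx, hy⟩
  set c := conjZPow (⟨x₁, hx₁A⟩ : alternatingGroup (Fin n)) ⟨y₁, hy₁A⟩
  have hc : ∀ k, (c k : Perm (Fin n)) = rotatedCycle n k := by
    intro k
    rw [← Subgroup.coe_subtype, map_conjZPow]
    simp [hx₁, hy₁, formPerm_finRange, rotatedCycle]
  have h013 : (c 0 * c 1 * c 3) ^ 5 = 1 := by
    rw [← map_eq_one_iff (alternatingGroup (Fin n)).subtype Subtype.val_injective]
    simpa [hc] using rotatedCycle_mul_mul_pow_five hn
  have h023 : (c 0 * c 2 * c 3) ^ 5 = 1 := by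
    simpa using conjZPow_mul_mul_pow_eq_one_of_map_eq_inv (ψ := MulAut.conj g * φ) hx hy h013 3
  apply rotatedCycle_mul_mul_pow_five_ne_one hn
  simpa [hc] using congrArg Subtype.val h023

/-- for odd `n ≥ 7`, with `x₁ = (1,2,4)` and `y₁ = (1,2,3,…,n)` in `A_n`,
there is no automorphism `φ` of `A_n` and element `g ∈ A_n` with
`g * φ x₁ * g⁻¹ = x₁⁻¹` and `g * φ y₁ * g⁻¹ = y₁⁻¹`.
Points `1,…,n` are modelled by `Fin n` (zero-based) and cycles by `List.formPerm`. -/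
theorem alternatingGroup_odd_first_pair_not_invertible
    (n : ℕ) [NeZero n] (hn : 7 ≤ n) (hodd : Odd n)
    (x₁ y₁ : Equiv.Perm (Fin n))
    (hx₁ : x₁ = List.formPerm [(0 : Fin n), 1, 3])
    (hy₁ : y₁ = List.formPerm (List.finRange n))
    (hx₁A : x₁ ∈ alternatingGroup (Fin n)) (hy₁A : y₁ ∈ alternatingGroup (Fin n)) :
    ¬ ∃ (φ : alternatingGroup (Fin n) ≃* alternatingGroup (Fin n))
        (g : alternatingGroup (Fin n)),
        g * φ ⟨x₁, hx₁A⟩ * g⁻¹ = (⟨x₁, hx₁A⟩ : alternatingGroup (Fin n))⁻¹ ∧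
        g * φ ⟨y₁, hy₁A⟩ * g⁻¹ = (⟨y₁, hy₁A⟩ : alternatingGroup (Fin n))⁻¹ :=
  alternatingGroup_odd_first_pair_not_invertible_general n hn x₁ y₁ hx₁ hy₁ hx₁A hy₁A
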